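/- arXiv:2507.00562 — 3 statements merged into one kernel-verified Lean document; each statement's English description precedes it below -/
import Mathlib

section
/- Let the trap configuration satisfy the quadratic recursion with constant c ≥ |I_1|^{-1}, and set ρ = (c/3)·(1 + 2/c + 2/(c²|I_1|²)). Then the expected survival time satisfies 𝔼(τ) ≤ 2|I_1| Σ_{i=1}^∞ ρ^{i−1}. In particular, if ρ < 1 then 𝔼(τ) ≤ 2|I_1|/(1 − ρ) < ∞. -/
open MeasureTheory ENNReal Set

noncomputable section

/-- A trap configuration: a trap at the origin and infinitely many traps. -/
def IsTrapConfig (ω : ℕ → Bool) : Prop :=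
  ω 0 = true ∧ {x : ℕ | ω x = true}.Infinite

/-- The location `x_i` of the `i`-th trap (traps enumerated in increasing order, `x_0 = 0`). -/
def trapLoc (ω : ℕ → Bool) (i : ℕ) : ℕ :=
  Nat.nth (fun x => ω x = true) i

/-- The length `|I_i| = x_i - x_{i-1}` of the `i`-th interval between traps, for `i ≥ 1`. -/
def gapLen (ω : ℕ → Bool) (i : ℕ) : ℕ :=
  trapLoc ω i - trapLoc ω (i - 1)

/-- The landscape satisfies the quadratic recursion `|I_{j+1}| = c * |I_j|^2` for all `j ≥ 1`. -/
def QuadRec (ω : ℕ → Bool) (c : ℝ) : Prop :=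
  ∀ j : ℕ, 1 ≤ j → (gapLen ω (j + 1) : ℝ) = c * (gapLen ω j : ℝ) ^ 2

/-- One-step transition probabilities of the trapped random walk on `ℕ ∪ {*}`,
where `none` plays the role of the absorbing cemetery state `*`. -/
def transProb (ω : ℕ → Bool) : Option ℕ → Option ℕ → ℝ
  | none, none => 1
  | none, some _ => 0
  | some x, none => if ω x = true then 1 / 3 else 0
  | some x, some y =>
    if x = 0 then (if y = 1 then 2 / 3 else 0)
    else if ω x = true then (if y = x - 1 ∨ y = x + 1 then 1 / 3 else 0)
    else (if y = x - 1 ∨ y = x + 1 then 1 / 2 else 0)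

/-- `S` is (a version of) the trapped random walk in the landscape `ω` under the probability
measure `P`: it starts at `0` and is a Markov chain with transition probabilities `transProb ω`. -/
def IsTrappedRW (ω : ℕ → Bool) {Ω : Type*} [MeasurableSpace Ω]
    (P : Measure Ω) (S : ℕ → Ω → Option ℕ) : Prop :=
  IsProbabilityMeasure P ∧
  (∀ (n : ℕ) (y : Option ℕ), MeasurableSet {a | S n a = y}) ∧
  P {a | S 0 a = some 0} = 1 ∧
  ∀ (n : ℕ) (path : ℕ → Option ℕ) (y : Option ℕ),
    P {a | (∀ i ≤ n, S i a = path i) ∧ S (n + 1) a = y}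
      = ENNReal.ofReal (transProb ω (path n) y) * P {a | ∀ i ≤ n, S i a = path i}

/-- The survival time `τ = inf {k : S k = *}`, valued in `ℕ∞`. -/
def survivalTime {Ω : Type*} (S : ℕ → Ω → Option ℕ) (a : Ω) : ℕ∞ :=
  sInf {t : ℕ∞ | ∃ k : ℕ, (k : ℕ∞) = t ∧ S k a = none}

/-- The expected survival time `𝔼(τ)`, valued in `ℝ≥0∞`. -/
def expSurvival {Ω : Type*} [MeasurableSpace Ω] (P : Measure Ω)
    (S : ℕ → Ω → Option ℕ) : ℝ≥0∞ :=
  ∫⁻ a, ((survivalTime S a : ℕ∞) : ℝ≥0∞) ∂P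

/-- Two landscapes are similar in the tail. -/
def SimilarInTail (ω₁ ω₂ : ℕ → Bool) : Prop :=
  ∃ p₁ p₂ : ℕ, ∀ x : ℕ, ω₁ (p₁ + x) = ω₂ (p₂ + x)

/-- Indicator that a state is a trap site. -/
def trapInd (ω : ℕ → Bool) : Option ℕ → Bool
  | none => false
  | some x => ω x

/-- Number of visits to the trap set at times `1, …, k`. -/
def visitCount {Ω : Type*} (ω : ℕ → Bool) (S : ℕ → Ω → Option ℕ) (a : Ω) (k : ℕ) : ℕ :=
  ((Finset.Icc 1 k).filter fun j => trapInd ω (S j a) = true).card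

/-- `N`, the total number of visits to the trap set at times `≥ 1` (before absorption). -/
def numVisits {Ω : Type*} (ω : ℕ → Bool) (S : ℕ → Ω → Option ℕ) (a : Ω) : ℕ∞ :=
  ⨆ k : ℕ, (visitCount ω S a k : ℕ∞)

/-- The hitting times `𝒯_i`: `𝒯_0 = 0` and `𝒯_i = inf {k ≥ 1 : #visits to D in [1,k] = i}`. -/
def hitTime {Ω : Type*} (ω : ℕ → Bool) (S : ℕ → Ω → Option ℕ) (i : ℕ) (a : Ω) : ℕ∞ :=
  if i = 0 then 0
  else sInf {t : ℕ∞ | ∃ k : ℕ, (k : ℕ∞) = t ∧ 1 ≤ k ∧ visitCount ω S a k = i}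

/-- The inter-arrival times `Y_i = 𝒯_i - 𝒯_{i-1}` for `1 ≤ i ≤ N`, and `Y_i = 0` for `i > N`. -/
def interArrival {Ω : Type*} (ω : ℕ → Bool) (S : ℕ → Ω → Option ℕ) (i : ℕ) (a : Ω) : ℕ∞ :=
  if 1 ≤ i ∧ (i : ℕ∞) ≤ numVisits ω S a
  then hitTime ω S i a - hitTime ω S (i - 1) a else 0

/-- `Y_i` viewed as an `ℝ≥0∞`-valued random variable. -/
def Yfun {Ω : Type*} (ω : ℕ → Bool) (S : ℕ → Ω → Option ℕ) (i : ℕ) (a : Ω) : ℝ≥0∞ :=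
  ((interArrival ω S i a : ℕ∞) : ℝ≥0∞)

/-- The embedded walk `ξ_j = S_{𝒯_j}` for `j ≤ N`, and `ξ_j = *` for `j > N`. -/
def embWalk {Ω : Type*} (ω : ℕ → Bool) (S : ℕ → Ω → Option ℕ) (j : ℕ) (a : Ω) : Option ℕ :=
  if (j : ℕ∞) ≤ numVisits ω S a then S (hitTime ω S j a).toNat a else none

/-- Sign of the increment of the embedded walk (an arbitrary junk value `2` is produced
if one of the two states is the cemetery state). -/
def stepSign : Option ℕ → Option ℕ → ℤ
  | some x, some y => Int.sign ((y : ℤ) - (x : ℤ))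
  | _, _ => 2

/-- `κ` belongs to `𝒦`: entries `κ_1, …, κ_{i-1}` lie in `{-1,0,1}` and all partial sums
are nonnegative. -/
def InKappaSet (i : ℕ) (κ : ℕ → ℤ) : Prop :=
  (∀ j : ℕ, 1 ≤ j → j ≤ i - 1 → κ j = -1 ∨ κ j = 0 ∨ κ j = 1) ∧
  ∀ m : ℕ, 1 ≤ m → m ≤ i - 1 → 0 ≤ ∑ n ∈ Finset.Icc 1 m, κ n

/-- The event `A_κ`: the walk visits at least `i-1` traps and the embedded walk moves
according to `κ` (for `i = 1` this is the whole sample space). -/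
def eventA {Ω : Type*} (ω : ℕ → Bool) (S : ℕ → Ω → Option ℕ) (i : ℕ) (κ : ℕ → ℤ) : Set Ω :=
  {a | ((i - 1 : ℕ) : ℕ∞) ≤ numVisits ω S a ∧
    ∀ j : ℕ, 1 ≤ j → j ≤ i - 1 →
      stepSign (embWalk ω S (j - 1) a) (embWalk ω S j a) = κ j}

/-- The event `A_κ⁺ = A_κ ∩ {S_{𝒯_{i-1}+1} = S_{𝒯_{i-1}} + 1}` (the whole sample space
for `i = 1`). -/
def eventAplus {Ω : Type*} (ω : ℕ → Bool) (S : ℕ → Ω → Option ℕ) (i : ℕ) (κ : ℕ → ℤ) :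
    Set Ω :=
  if i = 1 then Set.univ
  else eventA ω S i κ ∩
    {a | ∃ x : ℕ, S (hitTime ω S (i - 1) a).toNat a = some x ∧
      S ((hitTime ω S (i - 1) a).toNat + 1) a = some (x + 1)}

/-- Conditional expectation `𝔼(f | A)` of an `ℝ≥0∞`-valued function given an event `A`. -/
def condExpOn {Ω : Type*} [MeasurableSpace Ω] (P : Measure Ω) (A : Set Ω)
    (f : Ω → ℝ≥0∞) : ℝ≥0∞ :=
  (∫⁻ a in A, f a ∂P) / P A

/-- Conditional probability `ℙ(A | B)`. -/
def condProb {Ω : Type*} [MeasurableSpace Ω] (P : Measure Ω) (A B : Set Ω) : ℝ≥0∞ :=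
  P (A ∩ B) / P B

/-- Crossing times between `b` and `b+1`, shifted by one: `crossTime S b 0 = l_{-1} = 0`,
`crossTime S b (n+1) = l_n` where `l_0 = inf {t : S t = b}` and `l_i` alternately hits
`b+1` and `b`. -/
def crossTime {Ω : Type*} (S : ℕ → Ω → Option ℕ) (b : ℕ) : ℕ → Ω → ℕ∞
  | 0, _ => 0
  | 1, a => sInf {t : ℕ∞ | ∃ k : ℕ, (k : ℕ∞) = t ∧ S k a = some b}
  | n + 2, a =>
    if crossTime S b (n + 1) a = ⊤ then ⊤
    else
      sInf {t : ℕ∞ | ∃ k : ℕ, (k : ℕ∞) = t ∧ crossTime S b (n + 1) a ≤ (k : ℕ∞) ∧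
        S k a = some (if S (crossTime S b (n + 1) a).toNat a = some b then b + 1 else b)}

/-- `T_n = τ ∧ l_n - τ ∧ l_{n-1}` (with the index shift `l_n = crossTime S b (n+1)`). -/
def crossDur {Ω : Type*} (S : ℕ → Ω → Option ℕ) (b : ℕ) (n : ℕ) (a : Ω) : ℕ∞ :=
  min (survivalTime S a) (crossTime S b (n + 1) a)
    - min (survivalTime S a) (crossTime S b n a)

/-- `ℰ_0 = 𝔼[T_0]`. -/
def cE0 {Ω : Type*} [MeasurableSpace Ω] (P : Measure Ω) (S : ℕ → Ω → Option ℕ)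
    (b : ℕ) : ℝ≥0∞ :=
  ∫⁻ a, ((crossDur S b 0 a : ℕ∞) : ℝ≥0∞) ∂P

/-- `𝒫_0 = ℙ(l_0 < ∞)`. -/
def cP0 {Ω : Type*} [MeasurableSpace Ω] (P : Measure Ω) (S : ℕ → Ω → Option ℕ)
    (b : ℕ) : ℝ≥0∞ :=
  P {a | crossTime S b 1 a ≠ ⊤}

/-- `ℰ₊ = 𝔼[T_2 | l_1 < ∞]`. -/
def cEplus {Ω : Type*} [MeasurableSpace Ω] (P : Measure Ω) (S : ℕ → Ω → Option ℕ)
    (b : ℕ) : ℝ≥0∞ :=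
  condExpOn P {a | crossTime S b 2 a ≠ ⊤} (fun a => ((crossDur S b 2 a : ℕ∞) : ℝ≥0∞))

/-- `ℰ₋ = 𝔼[T_3 | l_2 < ∞]`. -/
def cEminus {Ω : Type*} [MeasurableSpace Ω] (P : Measure Ω) (S : ℕ → Ω → Option ℕ)
    (b : ℕ) : ℝ≥0∞ :=
  condExpOn P {a | crossTime S b 3 a ≠ ⊤} (fun a => ((crossDur S b 3 a : ℕ∞) : ℝ≥0∞))

/-- `𝒫₊ = ℙ(l_2 < ∞ | l_1 < ∞)`. -/
def cPplus {Ω : Type*} [MeasurableSpace Ω] (P : Measure Ω) (S : ℕ → Ω → Option ℕ)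
    (b : ℕ) : ℝ≥0∞ :=
  P {a | crossTime S b 3 a ≠ ⊤} / P {a | crossTime S b 2 a ≠ ⊤}

/-- `𝒫₋ = ℙ(l_3 < ∞ | l_2 < ∞)`. -/
def cPminus {Ω : Type*} [MeasurableSpace Ω] (P : Measure Ω) (S : ℕ → Ω → Option ℕ)
    (b : ℕ) : ℝ≥0∞ :=
  P {a | crossTime S b 4 a ≠ ⊤} / P {a | crossTime S b 3 a ≠ ⊤}

/-- `ω₂` is obtained from `ω₁` by lengthening the `k`-th interval by one site. -/
def IsLengthened (ω₁ ω₂ : ℕ → Bool) (k : ℕ) : Prop :=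
  (∀ x : ℕ, x ≤ trapLoc ω₁ (k - 1) → ω₂ x = ω₁ x) ∧
  ω₂ (trapLoc ω₁ (k - 1) + 1) = false ∧
  ∀ x : ℕ, trapLoc ω₁ (k - 1) + 1 < x → ω₂ x = ω₁ (x - 1)

end


/-!
If `h ≥ 0` satisfies the drift inequality `P h + 1 ≤ h` away from the cemetery, then
`𝔼 τ = ∑ₙ ℙ(τ > n) ≤ h(0)`: the quantities `𝔼 h(Sₙ) + ℙ(τ > 0) + ⋯ + ℙ(τ > n - 1)` decrease in `n`.

We take `h` piecewise quadratic: on `[x_j, x_{j+1}]` it is the expected time for the simple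
random walk to leave the interval plus the linear interpolation of prescribed values `V_j` at the
traps. The drift inequality then holds with equality between traps, and at the traps it becomes
an inequality between consecutive `V_j` and gap lengths `L_j = |I_j|`. Under
`L_{j+1} = c L_j²` with `c < 1` (which `ρ < 1` forces), the values
`V_j = q L_j² + (1 - q) L_j + 2 + q`, `q = 3c / (2(1 - c))`, satisfy them, and
`V_0 ≤ 6 L_1 / (1 - c) ≤ 2 L_1 / (1 - ρ)`. For `ρ ≥ 1` the claimed bound is `∞`.
-/

noncomputable section

namespace TrappedWalk

theorem ofReal_mul_add_one_le {r a b : ℝ} (hr : 0 ≤ r) (ha : 0 ≤ a) (h : r * a + 1 ≤ b) :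
    ENNReal.ofReal r * ENNReal.ofReal a + 1 ≤ ENNReal.ofReal b := by
  rw [← ENNReal.ofReal_mul hr, ← ENNReal.ofReal_one,
    ← ENNReal.ofReal_add (mul_nonneg hr ha) zero_le_one]
  exact ENNReal.ofReal_le_ofReal h

theorem ofReal_mul_tsum_geometric {a r : ℝ} (ha : 0 ≤ a) (hr₀ : 0 ≤ r) (hr₁ : r < 1) :
    ENNReal.ofReal a * ∑' i : ℕ, ENNReal.ofReal r ^ i = ENNReal.ofReal (a / (1 - r)) := by
  rw [ENNReal.tsum_geometric, ← ENNReal.ofReal_one, ← ENNReal.ofReal_sub _ hr₀,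
    ← ENNReal.ofReal_inv_of_pos (sub_pos.mpr hr₁), ← ENNReal.ofReal_mul ha, div_eq_mul_inv]

section MarkovChain

variable {α Ω : Type*} [MeasurableSpace Ω] {P : Measure Ω}

theorem measure_eq_tsum_inter_fiber {β : Type*} [Countable β] {X : Ω → β}
    (hX : ∀ y, MeasurableSet {a | X a = y}) (A : Set Ω) :
    P A = ∑' y, P (A ∩ {a | X a = y}) := by
  calc P A = P.restrict A (X ⁻¹' Set.univ) := by simp
    _ = ∑' y : (Set.univ : Set β), P.restrict A (X ⁻¹' {↑y}) :=
      (tsum_measure_preimage_singleton Set.countable_univ fun y _ => hX y).symm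
    _ = ∑' y, P.restrict A (X ⁻¹' {y}) := tsum_univ (f := fun y => P.restrict A (X ⁻¹' {y}))
    _ = ∑' y, P (A ∩ {a | X a = y}) :=
      tsum_congr fun y => by
        rw [Measure.restrict_apply (t := X ⁻¹' {y}) (hX y), Set.inter_comm]; rfl

theorem measurable_comp_of_countable [Countable α] {X : Ω → α}
    (hX : ∀ y, MeasurableSet {a | X a = y}) (g : α → ℝ≥0∞) : Measurable fun a => g (X a) :=
  let _ : MeasurableSpace α := ⊤
  (measurable_of_countable g).comp (measurable_to_countable' hX)

theorem lintegral_comp_eq_tsum [Countable α] {X : Ω → α}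
    (hX : ∀ y, MeasurableSet {a | X a = y}) (g : α → ℝ≥0∞) :
    ∫⁻ a, g (X a) ∂P = ∑' x, g x * P {a | X a = x} := by
  let _ : MeasurableSpace α := ⊤
  have hmeas : Measurable X := measurable_to_countable' hX
  rw [← lintegral_map (measurable_of_countable g) hmeas, lintegral_countable']
  refine tsum_congr fun x => ?_
  rw [Measure.map_apply hmeas (measurableSet_singleton x)]
  rfl

/-- `IsTrappedRW` for a general transition function `p` and initial state `x₀`. -/
structure IsMarkovChain (p : α → α → ℝ) (x₀ : α) (P : Measure Ω) (S : ℕ → Ω → α) : Prop where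
  isProbabilityMeasure : IsProbabilityMeasure P
  measurableSet_eq : ∀ (n : ℕ) (y : α), MeasurableSet {a | S n a = y}
  measure_start : P {a | S 0 a = x₀} = 1
  measure_path_succ : ∀ (n : ℕ) (path : ℕ → α) (y : α),
    P {a | (∀ i ≤ n, S i a = path i) ∧ S (n + 1) a = y}
      = ENNReal.ofReal (p (path n) y) * P {a | ∀ i ≤ n, S i a = path i}

theorem _root_.IsTrappedRW.isMarkovChain {ω : ℕ → Bool} {S : ℕ → Ω → Option ℕ}
    (hS : IsTrappedRW ω P S) : IsMarkovChain (transProb ω) (some 0) P S :=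
  ⟨hS.1, hS.2.1, hS.2.2.1, hS.2.2.2⟩

namespace IsMarkovChain

variable {p : α → α → ℝ} {x₀ : α} {S : ℕ → Ω → α}

def pathUpTo (S : ℕ → Ω → α) (n : ℕ) (a : Ω) : Fin (n + 1) → α := fun i => S i a

theorem measurableSet_pathUpTo_eq (hS : IsMarkovChain p x₀ P S) (n : ℕ) (q : Fin (n + 1) → α) :
    MeasurableSet {a | pathUpTo S n a = q} := by
  simp only [pathUpTo, funext_iff, Set.ofPred_forall]
  exact MeasurableSet.iInter fun i => hS.measurableSet_eq i (q i)

theorem measure_pathUpTo_eq_inter (hS : IsMarkovChain p x₀ P S) (n : ℕ)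
    (q : Fin (n + 1) → α) (y : α) :
    P ({a | pathUpTo S n a = q} ∩ {a | S (n + 1) a = y})
      = ENNReal.ofReal (p (q (Fin.last n)) y) * P {a | pathUpTo S n a = q} := by
  let path : ℕ → α := fun i => if h : i < n + 1 then q ⟨i, h⟩ else y
  have hcyl : {a | pathUpTo S n a = q} = {a | ∀ i ≤ n, S i a = path i} := by
    ext a
    refine ⟨fun h i hi => ?_, fun h => funext fun i => ?_⟩
    · show S i a = dite _ _ _
      rw [dif_pos (by omega)]
      exact congrFun h ⟨i, by omega⟩
    · have := h i.1 (by omega)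
      rwa [show path i.1 = q i from dif_pos i.2] at this
  have hlast : path n = q (Fin.last n) := dif_pos (by omega)
  rw [hcyl, ← hlast, ← hS.measure_path_succ]
  rfl

theorem measure_step (hS : IsMarkovChain p x₀ P S) [Countable α] (n : ℕ) (x y : α) :
    P {a | S n a = x ∧ S (n + 1) a = y} = ENNReal.ofReal (p x y) * P {a | S n a = x} := by
  rw [measure_eq_tsum_inter_fiber (hS.measurableSet_pathUpTo_eq n),
    measure_eq_tsum_inter_fiber (hS.measurableSet_pathUpTo_eq n) {a | S n a = x},
    ← ENNReal.tsum_mul_left]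
  refine tsum_congr fun q => ?_
  by_cases hq : q (Fin.last n) = x
  · subst hq
    have hlast : {a | pathUpTo S n a = q} ⊆ {a | S n a = q (Fin.last n)} := fun a ha => by
      rw [Set.mem_ofPred_eq, ← Set.mem_ofPred_eq.mp ha]; rfl
    rw [Set.inter_eq_right.mpr hlast, ← measure_pathUpTo_eq_inter hS]
    congr 1
    ext a
    exact ⟨fun ⟨⟨_, h⟩, h'⟩ => ⟨h', h⟩, fun ⟨h', h⟩ => ⟨⟨hlast h', h⟩, h'⟩⟩
  · have hempty : {a | S n a = x} ∩ {a | pathUpTo S n a = q} = ∅ := by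
      ext a
      simp only [Set.mem_inter_iff, Set.mem_ofPred_eq, Set.mem_empty_iff_false, iff_false]
      rintro ⟨hx, rfl⟩
      exact hq hx
    have hsub : {a | S n a = x ∧ S (n + 1) a = y} ∩ {a | pathUpTo S n a = q}
        ⊆ {a | S n a = x} ∩ {a | pathUpTo S n a = q} := fun a ha => ⟨ha.1.1, ha.2⟩
    rw [hempty, Set.subset_empty_iff] at hsub
    rw [hempty, hsub, measure_empty, mul_zero]

theorem measure_succ_eq_tsum (hS : IsMarkovChain p x₀ P S) [Countable α] (n : ℕ) (y : α) :
    P {a | S (n + 1) a = y} = ∑' x, ENNReal.ofReal (p x y) * P {a | S n a = x} := by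
  rw [measure_eq_tsum_inter_fiber (hS.measurableSet_eq n)]
  refine tsum_congr fun x => ?_
  rw [← hS.measure_step, Set.inter_comm]
  rfl

theorem lintegral_start (hS : IsMarkovChain p x₀ P S) (f : α → ℝ≥0∞) :
    ∫⁻ a, f (S 0 a) ∂P = f x₀ := by
  have := hS.isProbabilityMeasure
  have hae : ∀ᵐ a ∂P, S 0 a = x₀ := by
    rw [ae_iff]
    exact (prob_compl_eq_zero_iff (hS.measurableSet_eq 0 x₀)).mpr hS.measure_start
  rw [lintegral_congr_ae (hae.mono fun a ha => congrArg f ha), lintegral_const, measure_univ,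
    mul_one]

theorem tsum_lintegral_le_of_drift (hS : IsMarkovChain p x₀ P S) [Countable α]
    (f g : α → ℝ≥0∞) (hdrift : ∀ x, ∑' y, ENNReal.ofReal (p x y) * f y + g x ≤ f x) :
    ∑' n, ∫⁻ a, g (S n a) ∂P ≤ f x₀ := by
  set F : ℕ → ℝ≥0∞ := fun n => ∫⁻ a, f (S n a) ∂P
  have hstep : ∀ n, F (n + 1) + ∫⁻ a, g (S n a) ∂P ≤ F n := fun n => by
    simp only [F, lintegral_comp_eq_tsum (hS.measurableSet_eq _), hS.measure_succ_eq_tsum,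
      ← ENNReal.tsum_mul_left]
    rw [ENNReal.tsum_comm, ← ENNReal.tsum_add]
    refine ENNReal.tsum_le_tsum fun x => ?_
    calc _ = (∑' y, ENNReal.ofReal (p x y) * f y + g x) * P {a | S n a = x} := by
          rw [add_mul, ← ENNReal.tsum_mul_right]
          congr 1
          exact tsum_congr fun y => by ring
      _ ≤ f x * P {a | S n a = x} := by gcongr; exact hdrift x
  have htel : ∀ n, ∑ k ∈ Finset.range n, ∫⁻ a, g (S k a) ∂P + F n ≤ F 0 := fun n => by
    induction n with
    | zero => simp
    | succ n ih =>
      calc ∑ k ∈ Finset.range (n + 1), ∫⁻ a, g (S k a) ∂P + F (n + 1)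
          = ∑ k ∈ Finset.range n, ∫⁻ a, g (S k a) ∂P + (F (n + 1) + ∫⁻ a, g (S n a) ∂P) := by
            rw [Finset.sum_range_succ]; ring
        _ ≤ F 0 := le_trans (by gcongr; exact hstep n) ih
  rw [← hS.lintegral_start f]
  exact ENNReal.tsum_le_of_sum_range_le fun n => le_trans le_self_add (htel n)

end IsMarkovChain

end MarkovChain

section Survival

theorem survivalTime_le_tsum {Ω : Type*} (S : ℕ → Ω → Option ℕ) (a : Ω) :
    (survivalTime S a : ℝ≥0∞) ≤ ∑' n, if S n a = none then 0 else 1 := by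
  have halive : ∀ n : ℕ, (n : ℕ∞) < survivalTime S a → S n a ≠ none := fun n hn hnone =>
    (sInf_le ⟨n, rfl, hnone⟩ : survivalTime S a ≤ n).not_gt hn
  cases hτ : survivalTime S a using ENat.recTopCoe with
  | top =>
    have hone : ∀ n, (if S n a = none then 0 else 1 : ℝ≥0∞) = 1 := fun n =>
      if_neg (halive n (hτ ▸ ENat.natCast_lt_top n))
    rw [tsum_congr hone, ENNReal.tsum_const_eq_top_of_ne_zero one_ne_zero]
    exact le_top
  | coe m =>
    calc ((m : ℕ∞) : ℝ≥0∞) = ∑ n ∈ Finset.range m, (if S n a = none then 0 else 1 : ℝ≥0∞) := by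
          rw [Finset.sum_congr rfl fun n hn =>
            if_neg (halive n (hτ ▸ by exact_mod_cast Finset.mem_range.mp hn))]
          simp
      _ ≤ _ := ENNReal.sum_le_tsum _

variable {Ω : Type*} [MeasurableSpace Ω] {P : Measure Ω} {S : ℕ → Ω → Option ℕ}

theorem expSurvival_le_of_drift {p : Option ℕ → Option ℕ → ℝ} {x₀ : Option ℕ}
    (hS : IsMarkovChain p x₀ P S) (f : Option ℕ → ℝ≥0∞)
    (hdrift : ∀ x, ∑' y, ENNReal.ofReal (p x y) * f y + (if x = none then 0 else 1) ≤ f x) :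
    expSurvival P S ≤ f x₀ :=
  calc expSurvival P S ≤ ∫⁻ a, ∑' n, (if S n a = none then 0 else 1) ∂P :=
        lintegral_mono (survivalTime_le_tsum S)
    _ = ∑' n, ∫⁻ a, (if S n a = none then 0 else 1) ∂P :=
        lintegral_tsum fun n =>
          (measurable_comp_of_countable (hS.measurableSet_eq n)
            fun x => if x = none then 0 else 1).aemeasurable
    _ ≤ f x₀ := hS.tsum_lintegral_le_of_drift f _ hdrift

end Survival

section TrappedRW

variable {ω : ℕ → Bool}

theorem tsum_transProb_zero_mul (F : Option ℕ → ℝ≥0∞) (hF : F none = 0) :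
    ∑' y, ENNReal.ofReal (transProb ω (some 0) y) * F y = ENNReal.ofReal (2 / 3) * F (some 1) := by
  rw [tsum_eq_single (some 1) fun y hy => ?_]
  · simp [transProb]
  · cases y with
    | none => simp [hF]
    | some m => simp [transProb, show m ≠ 1 from fun h => hy (h ▸ rfl)]

theorem tsum_transProb_mul {x : ℕ} (hx : x ≠ 0) (F : Option ℕ → ℝ≥0∞) (hF : F none = 0) :
    ∑' y, ENNReal.ofReal (transProb ω (some x) y) * F y
      = ENNReal.ofReal (if ω x = true then 1 / 3 else 1 / 2)
          * (F (some (x - 1)) + F (some (x + 1))) := by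
  have hne : (some (x - 1) : Option ℕ) ≠ some (x + 1) := by simp
  rw [tsum_eq_sum (s := {some (x - 1), some (x + 1)}) fun y hy => ?_, Finset.sum_pair hne,
    mul_add]
  · cases h : ω x <;> simp [transProb, hx, h]
  · cases y with
    | none => simp [hF]
    | some m =>
      simp only [Finset.mem_insert, Finset.mem_singleton, Option.some.injEq, not_or] at hy
      simp [transProb, hx, hy.1, hy.2]

theorem expSurvival_le_of_lyapunov {Ω : Type*} [MeasurableSpace Ω] {P : Measure Ω}
    {S : ℕ → Ω → Option ℕ} (hS : IsTrappedRW ω P S) (h : ℕ → ℝ) (hnonneg : ∀ x, 0 ≤ h x)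
    (hzero : 2 * h 1 + 3 ≤ 3 * h 0)
    (htrap : ∀ x, x ≠ 0 → ω x = true → h (x - 1) + h (x + 1) + 3 ≤ 3 * h x)
    (hfree : ∀ x, x ≠ 0 → ω x = false → h (x - 1) + h (x + 1) + 2 ≤ 2 * h x) :
    expSurvival P S ≤ ENNReal.ofReal (h 0) := by
  refine expSurvival_le_of_drift hS.isMarkovChain (fun y => y.elim 0 fun x => .ofReal (h x))
    fun y => ?_
  rcases y with _ | x
  · simp only [if_pos, add_zero, Option.elim_none, nonpos_iff_eq_zero]
    exact ENNReal.tsum_eq_zero.mpr fun y => by cases y <;> simp [transProb]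
  rw [if_neg (Option.some_ne_none x)]
  rcases eq_or_ne x 0 with rfl | hx
  · rw [tsum_transProb_zero_mul _ rfl]
    exact ofReal_mul_add_one_le (by norm_num) (hnonneg 1) (by linarith)
  · rw [tsum_transProb_mul hx _ rfl]
    simp only [Option.elim_some]
    rw [← ENNReal.ofReal_add (hnonneg _) (hnonneg _)]
    refine ofReal_mul_add_one_le (by split_ifs <;> norm_num)
      (add_nonneg (hnonneg _) (hnonneg _)) ?_
    cases hωx : ω x
    · simp only [Bool.false_eq_true, if_false]; linarith [hfree x hx hωx]
    · simp only [if_true]; linarith [htrap x hx hωx]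

end TrappedRW

section Landscape

variable {ω : ℕ → Bool}

theorem trapLoc_zero (hω : IsTrapConfig ω) : trapLoc ω 0 = 0 := by
  rw [trapLoc, Nat.nth_zero]
  exact Nat.sInf_eq_zero.mpr (Or.inl hω.1)

theorem trapLoc_strictMono (hω : IsTrapConfig ω) : StrictMono (trapLoc ω) :=
  Nat.nth_strictMono hω.2

theorem trapLoc_isTrap (hω : IsTrapConfig ω) (j : ℕ) : ω (trapLoc ω j) = true :=
  Nat.nth_mem_of_infinite hω.2 j

theorem exists_trapLoc_eq {x : ℕ} (hx : ω x = true) : ∃ j, trapLoc ω j = x :=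
  ⟨_, Nat.nth_count hx⟩

theorem gapLen_succ_eq (hω : IsTrapConfig ω) (j : ℕ) :
    (gapLen ω (j + 1) : ℝ) = trapLoc ω (j + 1) - trapLoc ω j := by
  rw [gapLen, Nat.add_sub_cancel, Nat.cast_sub (trapLoc_strictMono hω (Nat.lt_add_one j)).le]

theorem one_le_gapLen (hω : IsTrapConfig ω) (j : ℕ) : (1 : ℝ) ≤ gapLen ω (j + 1) := by
  rw [gapLen_succ_eq hω, le_sub_iff_add_le']
  exact_mod_cast trapLoc_strictMono hω (Nat.lt_add_one j)

/-- The index `j` of the interval `[x_j, x_{j+1})` containing `x`. -/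
def intervalIdx (ω : ℕ → Bool) (x : ℕ) : ℕ :=
  Nat.findGreatest (fun j => trapLoc ω j ≤ x) x

theorem trapLoc_intervalIdx_le (hω : IsTrapConfig ω) (x : ℕ) :
    trapLoc ω (intervalIdx ω x) ≤ x :=
  Nat.findGreatest_spec (P := fun j => trapLoc ω j ≤ x) (Nat.zero_le x)
    (by rw [trapLoc_zero hω]; exact Nat.zero_le x)

theorem lt_trapLoc_intervalIdx_add_one (hω : IsTrapConfig ω) (x : ℕ) :
    x < trapLoc ω (intervalIdx ω x + 1) := by
  by_contra! h
  exact Nat.findGreatest_is_greatest (Nat.lt_succ_self _)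
    ((trapLoc_strictMono hω).le_apply.trans h) h

theorem intervalIdx_eq (hω : IsTrapConfig ω) {j x : ℕ} (h₁ : trapLoc ω j ≤ x)
    (h₂ : x < trapLoc ω (j + 1)) : intervalIdx ω x = j := by
  have hlo := trapLoc_intervalIdx_le hω x
  have hhi := lt_trapLoc_intervalIdx_add_one hω x
  rcases lt_trichotomy (intervalIdx ω x) j with h | h | h
  · have := (trapLoc_strictMono hω).monotone (show intervalIdx ω x + 1 ≤ j by omega)
    omega
  · exact h
  · have := (trapLoc_strictMono hω).monotone (show j + 1 ≤ intervalIdx ω x by omega)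
    omega

/-- For the simple random walk started at `t ∈ [0, L]`: the expected exit time from `(0, L)`
plus the expected payoff when exiting at `0` pays `a` and exiting at `L` pays `b`. -/
def bridge (L t a b : ℝ) : ℝ := (1 - t / L) * a + t / L * b + t * (L - t)

theorem bridge_zero (L a b : ℝ) : bridge L 0 a b = a := by simp [bridge]

theorem bridge_self {L : ℝ} (hL : L ≠ 0) (a b : ℝ) : bridge L L a b = b := by
  simp [bridge, div_self hL]

theorem bridge_sub_one_add_bridge_add_one (L t a b : ℝ) :
    bridge L (t - 1) a b + bridge L (t + 1) a b + 2 = 2 * bridge L t a b := by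
  unfold bridge; ring

theorem bridge_nonneg {L t a b : ℝ} (hL : 0 < L) (ht : 0 ≤ t) (htL : t ≤ L) (ha : 0 ≤ a)
    (hb : 0 ≤ b) : 0 ≤ bridge L t a b := by
  have h₁ : 0 ≤ 1 - t / L := sub_nonneg.mpr (div_le_one_of_le₀ htL hL.le)
  have h₂ : 0 ≤ t * (L - t) := mul_nonneg ht (sub_nonneg.mpr htL)
  unfold bridge
  positivity

/-- The piecewise quadratic function that takes the value `V j` at the trap `x_j` and solves
the discrete Poisson equation `(h(x-1) + h(x+1))/2 + 1 = h(x)` between traps. -/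
def lyapunov (ω : ℕ → Bool) (V : ℕ → ℝ) (x : ℕ) : ℝ :=
  bridge (gapLen ω (intervalIdx ω x + 1)) ((x : ℝ) - trapLoc ω (intervalIdx ω x))
    (V (intervalIdx ω x)) (V (intervalIdx ω x + 1))

variable (V : ℕ → ℝ)

theorem lyapunov_eq (hω : IsTrapConfig ω) {j x : ℕ} (h₁ : trapLoc ω j ≤ x)
    (h₂ : x ≤ trapLoc ω (j + 1)) :
    lyapunov ω V x = bridge (gapLen ω (j + 1)) ((x : ℝ) - trapLoc ω j) (V j) (V (j + 1)) := by
  rcases h₂.lt_or_eq with h₂ | rfl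
  · rw [lyapunov, intervalIdx_eq hω h₁ h₂]
  · rw [lyapunov, intervalIdx_eq hω le_rfl (trapLoc_strictMono hω (Nat.lt_add_one (j + 1))),
      sub_self, bridge_zero, ← gapLen_succ_eq hω,
      bridge_self (zero_lt_one.trans_le (one_le_gapLen hω j)).ne']

theorem lyapunov_trapLoc (hω : IsTrapConfig ω) (j : ℕ) : lyapunov ω V (trapLoc ω j) = V j := by
  rw [lyapunov_eq V hω le_rfl (trapLoc_strictMono hω (Nat.lt_add_one j)).le, sub_self, bridge_zero]

theorem lyapunov_trapLoc_add_one (hω : IsTrapConfig ω) (j : ℕ) :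
    lyapunov ω V (trapLoc ω j + 1)
      = V j + (V (j + 1) - V j) / gapLen ω (j + 1) + gapLen ω (j + 1) - 1 := by
  rw [lyapunov_eq V hω (Nat.le_succ _) (trapLoc_strictMono hω (Nat.lt_add_one j))]
  have hL : (gapLen ω (j + 1) : ℝ) ≠ 0 := (zero_lt_one.trans_le (one_le_gapLen hω j)).ne'
  push_cast
  rw [add_sub_cancel_left]
  unfold bridge
  field_simp
  ring

theorem lyapunov_trapLoc_sub_one (hω : IsTrapConfig ω) (j : ℕ) :
    lyapunov ω V (trapLoc ω (j + 1) - 1)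
      = V (j + 1) - (V (j + 1) - V j) / gapLen ω (j + 1) + gapLen ω (j + 1) - 1 := by
  have hlt := trapLoc_strictMono hω (Nat.lt_add_one j)
  rw [lyapunov_eq V hω (j := j) (by omega) (by omega), Nat.cast_sub (by omega), Nat.cast_one,
    show (trapLoc ω (j + 1) : ℝ) - 1 - trapLoc ω j = gapLen ω (j + 1) - 1 by
      rw [gapLen_succ_eq hω]; ring]
  have hL : (gapLen ω (j + 1) : ℝ) ≠ 0 := (zero_lt_one.trans_le (one_le_gapLen hω j)).ne'
  unfold bridge
  field_simp
  ring

theorem lyapunov_sub_one_add_lyapunov_add_one (hω : IsTrapConfig ω) {x : ℕ}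
    (hx : ω x = false) :
    lyapunov ω V (x - 1) + lyapunov ω V (x + 1) + 2 = 2 * lyapunov ω V x := by
  have h₁ := trapLoc_intervalIdx_le hω x
  have h₂ := lt_trapLoc_intervalIdx_add_one hω x
  generalize intervalIdx ω x = j at h₁ h₂
  have hne : trapLoc ω j ≠ x := fun h => by simpa [h, hx] using trapLoc_isTrap hω j
  rw [lyapunov_eq V hω (j := j) (x := x - 1) (by omega) (by omega),
    lyapunov_eq V hω (j := j) (x := x + 1) (by omega) (by omega), lyapunov_eq V hω h₁ h₂.le,
    Nat.cast_sub (by omega), Nat.cast_add, Nat.cast_one, sub_right_comm, add_sub_right_comm]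
  exact bridge_sub_one_add_bridge_add_one ..

theorem lyapunov_nonneg (hω : IsTrapConfig ω) (hV : ∀ j, 0 ≤ V j) (x : ℕ) :
    0 ≤ lyapunov ω V x := by
  have h₁ := trapLoc_intervalIdx_le hω x
  have h₂ := lt_trapLoc_intervalIdx_add_one hω x
  have hL := gapLen_succ_eq hω (intervalIdx ω x)
  have h₁' : (trapLoc ω (intervalIdx ω x) : ℝ) ≤ x := by exact_mod_cast h₁
  have h₂' : (x : ℝ) ≤ trapLoc ω (intervalIdx ω x + 1) := by exact_mod_cast h₂.le
  exact bridge_nonneg (zero_lt_one.trans_le (one_le_gapLen hω _)) (by linarith) (by linarith)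
    (hV _) (hV _)

end Landscape

section Criterion

variable {ω : ℕ → Bool} {Ω : Type*} [MeasurableSpace Ω] {P : Measure Ω}
  {S : ℕ → Ω → Option ℕ}

theorem expSurvival_le_of_trapValues (hω : IsTrapConfig ω) (hS : IsTrappedRW ω P S)
    (V : ℕ → ℝ) (hV : ∀ j, 0 ≤ V j)
    (hzero : 2 * ((V 1 - V 0) / gapLen ω 1) + 2 * gapLen ω 1 + 1 ≤ V 0)
    (htrap : ∀ j, (V (j + 2) - V (j + 1)) / gapLen ω (j + 2) - (V (j + 1) - V j) / gapLen ω (j + 1)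
      + gapLen ω (j + 2) + gapLen ω (j + 1) + 1 ≤ V (j + 1)) :
    expSurvival P S ≤ ENNReal.ofReal (V 0) := by
  have h₀ : lyapunov ω V 0 = V 0 := by simpa [trapLoc_zero hω] using lyapunov_trapLoc V hω 0
  have h₁ : lyapunov ω V 1 = V 0 + (V 1 - V 0) / gapLen ω 1 + gapLen ω 1 - 1 := by
    simpa [trapLoc_zero hω] using lyapunov_trapLoc_add_one V hω 0
  rw [← h₀]
  refine expSurvival_le_of_lyapunov hS _ (lyapunov_nonneg V hω hV) (by linarith) ?_
    fun x _ hx => (lyapunov_sub_one_add_lyapunov_add_one V hω hx).le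
  intro x hx₀ hx
  obtain ⟨k, rfl⟩ := exists_trapLoc_eq hx
  obtain ⟨j, rfl⟩ := Nat.exists_eq_add_one_of_ne_zero fun hk => hx₀ (hk ▸ trapLoc_zero hω)
  rw [lyapunov_trapLoc_sub_one V hω, lyapunov_trapLoc_add_one V hω, lyapunov_trapLoc V hω]
  linarith [htrap j]

end Criterion

section QuadraticRecursion

/-- The choice `q = 3c / (2(1 - c))`, i.e. `q / c = q + 3/2`, leaves a margin `L_{j+1} / 2` in
the trap inequalities. -/
def quadCoeff (c : ℝ) : ℝ := 3 * c / (2 * (1 - c))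

def quadValue (q L : ℝ) : ℝ := q * L ^ 2 + (1 - q) * L + 2 + q

theorem quadCoeff_nonneg {c : ℝ} (hc₀ : 0 ≤ c) (hc₁ : c < 1) : 0 ≤ quadCoeff c :=
  div_nonneg (by linarith) (by linarith)

theorem quadCoeff_mul_one_sub {c : ℝ} (hc₁ : c < 1) : quadCoeff c * (1 - c) = 3 / 2 * c := by
  rw [quadCoeff]
  field_simp [(sub_pos.mpr hc₁).ne']

theorem quadValue_nonneg {q L : ℝ} (hq : 0 ≤ q) (hL : 0 ≤ L) : 0 ≤ quadValue q L := by
  unfold quadValue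
  nlinarith [mul_nonneg hq (sq_nonneg (L - 1 / 2))]

theorem quadValue_slope {q c v w : ℝ} (hq : q * (1 - c) = 3 / 2 * c) (hw : w = c * v ^ 2)
    (hw₀ : w ≠ 0) :
    (quadValue q w - quadValue q v) / w = q * w - (q + 3 / 2) + (1 - q) * (1 - v / w) := by
  have key : q * v ^ 2 = (q + 3 / 2) * w := by rw [hw]; linear_combination v ^ 2 * hq
  unfold quadValue
  field_simp
  linear_combination (-2) * key

theorem quadValue_trap_ineq {q c u v w : ℝ} (hq₀ : 0 ≤ q) (hq : q * (1 - c) = 3 / 2 * c)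
    (hu : 1 ≤ u) (huv : u ≤ v) (hvw : v ≤ w) (hv : v = c * u ^ 2) (hw : w = c * v ^ 2) :
    (quadValue q w - quadValue q v) / w - (quadValue q v - quadValue q u) / v + w + v + 1
      ≤ quadValue q v := by
  have hv₀ : 0 < v := by linarith
  have hw₀ : 0 < w := by linarith
  have key : q * v ^ 2 = (q + 3 / 2) * w := by rw [hw]; linear_combination v ^ 2 * hq
  rw [quadValue_slope hq hw hw₀.ne', quadValue_slope hq hv hv₀.ne']
  have hr₁ : v / w ≤ 1 := div_le_one_of_le₀ hvw hw₀.le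
  have hr₂ : u / v ≤ 1 := div_le_one_of_le₀ huv hv₀.le
  have hr₁' : 0 ≤ v / w := by positivity
  have hr₂' : 0 ≤ u / v := by positivity
  -- the slack is `w / 2 + 1 + q - (1 - q) (u / v - v / w)`, and both ratios lie in `[0, 1]`
  unfold quadValue
  nlinarith [mul_nonneg hq₀ (by linarith : (0 : ℝ) ≤ 1 - u / v + v / w)]

theorem quadValue_trap_ineq_first {c u : ℝ} (hc₁ : c < 1) (hu : 2 ≤ u) (hcu : 1 ≤ c * u) :
    (quadValue (quadCoeff c) (c * u ^ 2) - quadValue (quadCoeff c) u) / (c * u ^ 2)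
      - (quadValue (quadCoeff c) u - (2 * quadValue (quadCoeff c) u / u + 1 + 2 * u)) / u
      + c * u ^ 2 + u + 1 ≤ quadValue (quadCoeff c) u := by
  have hc₀ : 0 < c := by nlinarith
  have h1c : 0 < 1 - c := by linarith
  have hu₀ : 0 < u := by linarith
  rw [← sub_nonneg]
  have key : quadValue (quadCoeff c) u - ((quadValue (quadCoeff c) (c * u ^ 2)
      - quadValue (quadCoeff c) u) / (c * u ^ 2)
      - (quadValue (quadCoeff c) u - (2 * quadValue (quadCoeff c) u / u + 1 + 2 * u)) / u
      + c * u ^ 2 + u + 1)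
      = ((1 - c) * c ^ 2 * u ^ 4 + (1 - c) * c * u ^ 2 + (11 * c ^ 2 - 7 * c + 2) * u
          + 2 * c ^ 2 - 8 * c) / (2 * (1 - c) * c * u ^ 2) := by
    unfold quadValue quadCoeff
    field_simp
    ring
  rw [key]
  apply div_nonneg _ (by positivity)
  have h1 : (1 - c) * u ^ 2 ≤ (1 - c) * c ^ 2 * u ^ 4 :=
    calc (1 - c) * u ^ 2 = (1 - c) * u ^ 2 * 1 ^ 2 := by ring
      _ ≤ (1 - c) * u ^ 2 * (c * u) ^ 2 := by gcongr
      _ = (1 - c) * c ^ 2 * u ^ 4 := by ring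
  have h2 : (1 - c) * u ≤ (1 - c) * c * u ^ 2 :=
    calc (1 - c) * u = (1 - c) * u * 1 := by ring
      _ ≤ (1 - c) * u * (c * u) := by gcongr
      _ = (1 - c) * c * u ^ 2 := by ring
  have h3 : 2 * (11 * c ^ 2 - 7 * c + 2) ≤ (11 * c ^ 2 - 7 * c + 2) * u := by
    nlinarith [sq_nonneg (c - 7 / 22)]
  -- with `h1`–`h3` the numerator is at least `24 c² - 28 c + 10 > 0`
  nlinarith [sq_nonneg (c - 7 / 12)]

def trapValue (ω : ℕ → Bool) (c : ℝ) : ℕ → ℝ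
  | 0 => 2 * quadValue (quadCoeff c) (gapLen ω 1) / gapLen ω 1 + 1 + 2 * gapLen ω 1
  | j + 1 => quadValue (quadCoeff c) (gapLen ω (j + 1))

variable {ω : ℕ → Bool} {c : ℝ}

theorem one_le_mul_gapLen (hrec : QuadRec ω c) (h₁ : 1 ≤ c * gapLen ω 1) (j : ℕ) :
    1 ≤ c * gapLen ω (j + 1) := by
  induction j with
  | zero => exact h₁
  | succ j ih =>
    rw [hrec (j + 1) (Nat.le_add_left 1 j), ← mul_assoc, ← one_mul (1 : ℝ)]
    nlinarith

theorem gapLen_le_gapLen_succ (hrec : QuadRec ω c) (h₁ : 1 ≤ c * gapLen ω 1) (j : ℕ) :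
    (gapLen ω (j + 1) : ℝ) ≤ gapLen ω (j + 2) := by
  rw [hrec (j + 1) (Nat.le_add_left 1 j)]
  nlinarith [one_le_mul_gapLen hrec h₁ j]

theorem two_le_gapLen_one (hω : IsTrapConfig ω) (hc₁ : c < 1) (h₁ : 1 ≤ c * gapLen ω 1) :
    (2 : ℝ) ≤ gapLen ω 1 := by
  have : (1 : ℝ) < gapLen ω 1 := by nlinarith [one_le_gapLen hω 0]
  exact_mod_cast (Nat.one_lt_cast.mp this : 2 ≤ gapLen ω 1)

theorem trapValue_zero_nonneg (hc₀ : 0 ≤ c) (hc₁ : c < 1) : 0 ≤ trapValue ω c 0 := by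
  have := quadValue_nonneg (quadCoeff_nonneg hc₀ hc₁) (gapLen ω 1).cast_nonneg
  simp only [trapValue]
  positivity

theorem trapValue_zero_mul_one_sub_le (hc₀ : 0 ≤ c) (hc₁ : c < 1) (hL : (2 : ℝ) ≤ gapLen ω 1) :
    trapValue ω c 0 * (1 - c) ≤ 6 * gapLen ω 1 := by
  have hL₀ : (0 : ℝ) < gapLen ω 1 := by linarith
  have key : trapValue ω c 0 * (1 - c)
      = (2 + c) * gapLen ω 1 + 3 - 6 * c + (4 - c) / gapLen ω 1 := by
    simp only [trapValue, quadValue, quadCoeff]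
    field_simp [(sub_pos.mpr hc₁).ne']
    ring
  have : (4 - c) / gapLen ω 1 ≤ (4 - c) / 2 := div_le_div_of_nonneg_left (by linarith) two_pos hL
  rw [key]
  nlinarith [mul_le_mul_of_nonneg_left hL (by linarith : (0 : ℝ) ≤ 4 - c)]

theorem expSurvival_le_trapValue (hω : IsTrapConfig ω) (hrec : QuadRec ω c) (hc₁ : c < 1)
    (h₁ : 1 ≤ c * gapLen ω 1) {Ω : Type*} [MeasurableSpace Ω] {P : Measure Ω}
    {S : ℕ → Ω → Option ℕ} (hS : IsTrappedRW ω P S) :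
    expSurvival P S ≤ ENNReal.ofReal (trapValue ω c 0) := by
  have hL₂ := two_le_gapLen_one hω hc₁ h₁
  have hc₀ : 0 < c := by nlinarith
  have hq₀ := quadCoeff_nonneg hc₀.le hc₁
  have hq := quadCoeff_mul_one_sub hc₁
  have hQ₁ := quadValue_nonneg hq₀ (by linarith : (0 : ℝ) ≤ gapLen ω 1)
  refine expSurvival_le_of_trapValues hω hS _ (fun j => ?_) ?_ fun j => ?_
  · cases j with
    | zero => exact trapValue_zero_nonneg hc₀.le hc₁
    | succ j => exact quadValue_nonneg hq₀ (Nat.cast_nonneg _)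
  · simp only [trapValue, zero_add]
    have : 0 ≤ 2 * (2 * quadValue (quadCoeff c) (gapLen ω 1) / gapLen ω 1 + 1 + 2 * gapLen ω 1)
        / gapLen ω 1 := by positivity
    rw [sub_div, mul_sub, mul_div_assoc', mul_div_assoc']
    linarith
  · cases j with
    | zero =>
      simp only [trapValue, zero_add, Nat.reduceAdd]
      rw [show (gapLen ω 2 : ℝ) = c * gapLen ω 1 ^ 2 from hrec 1 le_rfl]
      exact quadValue_trap_ineq_first hc₁ hL₂ h₁
    | succ j =>
      exact quadValue_trap_ineq hq₀ hq (one_le_gapLen hω j) (gapLen_le_gapLen_succ hrec h₁ j)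
        (gapLen_le_gapLen_succ hrec h₁ (j + 1)) (hrec (j + 1) (Nat.le_add_left 1 j))
        (hrec (j + 2) (Nat.le_add_left 1 (j + 1)))

theorem expSurvival_le_of_quadRec (hω : IsTrapConfig ω) (hrec : QuadRec ω c) (hc₁ : c < 1)
    (h₁ : 1 ≤ c * gapLen ω 1) {Ω : Type*} [MeasurableSpace Ω] {P : Measure Ω}
    {S : ℕ → Ω → Option ℕ} (hS : IsTrappedRW ω P S) :
    expSurvival P S ≤ ENNReal.ofReal (6 * gapLen ω 1 / (1 - c)) := by
  have hc₀ : 0 < c := by nlinarith [one_le_gapLen hω 0]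
  refine (expSurvival_le_trapValue hω hrec hc₁ h₁ hS).trans (ENNReal.ofReal_le_ofReal ?_)
  rw [le_div_iff₀ (sub_pos.mpr hc₁)]
  exact trapValue_zero_mul_one_sub_le hc₀.le hc₁ (two_le_gapLen_one hω hc₁ h₁)

end QuadraticRecursion

end TrappedWalk

end

open TrappedWalk

/-- geometric upper bound for the expected survival time. -/
theorem expSurvival_upper_bound
    (ω : ℕ → Bool) (hω : IsTrapConfig ω) (c : ℝ) (hrec : QuadRec ω c)
    (hc : ((gapLen ω 1 : ℝ))⁻¹ ≤ c)
    {Ω : Type*} [MeasurableSpace Ω] (P : MeasureTheory.Measure Ω)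
    (S : ℕ → Ω → Option ℕ) (hS : IsTrappedRW ω P S)
    (ρ : ℝ)
    (hρ : ρ = (c / 3) * (1 + 2 / c + 2 / (c ^ 2 * (gapLen ω 1 : ℝ) ^ 2))) :
    expSurvival P S
        ≤ ENNReal.ofReal (2 * (gapLen ω 1 : ℝ)) * ∑' i : ℕ, ENNReal.ofReal ρ ^ i ∧
    (ρ < 1 →
      expSurvival P S ≤ ENNReal.ofReal (2 * (gapLen ω 1 : ℝ) / (1 - ρ)) ∧
      expSurvival P S < ⊤) := by
  set L : ℝ := (gapLen ω 1 : ℝ)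
  have hL : 0 < L := zero_lt_one.trans_le (one_le_gapLen hω 0)
  have hc₀ : 0 < c := (inv_pos.mpr hL).trans_le hc
  have hρ₀ : 0 < ρ := by rw [hρ]; positivity
  have hρc : 3 * (1 - ρ) + 2 / (c * L ^ 2) = 1 - c := by rw [hρ]; field_simp; ring
  have hρc' : 0 < 2 / (c * L ^ 2) := by positivity
  rcases lt_or_ge ρ 1 with hρ₁ | hρ₁
  · have hbound : expSurvival P S ≤ ENNReal.ofReal (2 * L / (1 - ρ)) := by
      refine (expSurvival_le_of_quadRec hω hrec (by linarith)
        ((inv_le_iff_one_le_mul₀ hL).mp hc) hS).trans (ENNReal.ofReal_le_ofReal ?_)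
      rw [div_le_div_iff₀ (by linarith) (by linarith)]
      nlinarith
    rw [ofReal_mul_tsum_geometric (by positivity) hρ₀.le hρ₁]
    exact ⟨hbound, fun _ => ⟨hbound, hbound.trans_lt ENNReal.ofReal_lt_top⟩⟩
  · refine ⟨?_, fun h => absurd h hρ₁.not_gt⟩
    rw [ENNReal.tsum_geometric, tsub_eq_zero_of_le (by simpa using hρ₁), ENNReal.inv_zero,
      ENNReal.mul_top (by simpa using hL)]
    exact le_top
end

section
/- The expected survival time is not monotone in the interval lengths: there exist a trap configuration ω^{(1)} and an index k ≥ 1 such that, if ω^{(2)} denotes the trap configuration obtained from ω^{(1)} by lengthening the k-th interval by one site (all other interval lengths unchanged), then 𝔼[τ^{(2)}] < 𝔼[τ^{(1)}]. -/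
open MeasureTheory ENNReal Set

/-!
Summing `ℙ(τ > n)` over `n`, the expected survival time is `∑ₙ ∑ₓ μₙ x`, where `μₙ = δ₀ Kⁿ` and
`K` is the sub-stochastic kernel of the walk on the live states `ℕ`. Hence `𝔼[τ] = u 0` for the
minimal nonnegative solution `u` of the Poisson equation `u = 1 + K u`, so `𝔼[τ] ≤ h 0` for every
nonnegative supersolution `h` and `g 0 ≤ 𝔼[τ]` for every bounded subsolution `g`.

Take `ω₁` with traps at `0`, `1` and on `[27, ∞)`; lengthening its first interval gives `ω₂` with
traps at `0`, `2` and on `[28, ∞)`. Test functions that are quadratic on the long trap-free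
stretch give `𝔼[τ₂] ≤ 15 < 151/10 ≤ 𝔼[τ₁]`.
-/

noncomputable section

namespace TrappedRW

open Filter Topology Finset

variable {ω : ℕ → Bool}

def liveKernel (ω : ℕ → Bool) (x y : ℕ) : ℝ≥0∞ :=
  ENNReal.ofReal (transProb ω (some x) (some y))

/-- `occupation ω n x = ℙ(τ > n, Sₙ = x)`, see `measure_aliveAt`. -/
def occupation (ω : ℕ → Bool) : ℕ → ℕ → ℝ≥0∞
  | 0 => fun x => if x = 0 then 1 else 0
  | n + 1 => fun y => ∑' x, occupation ω n x * liveKernel ω x y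

def meanSurvival (ω : ℕ → Bool) : ℝ≥0∞ :=
  ∑' n, ∑' x, occupation ω n x

def poissonOp (ω : ℕ → Bool) (f : ℕ → ℝ≥0∞) (x : ℕ) : ℝ≥0∞ :=
  1 + ∑' y, liveKernel ω x y * f y

/-- At `x = 0` the truncated `x - 1 = 0` has weight `transProb ω (some 0) (some 0) = 0`. -/
def poissonOpReal (ω : ℕ → Bool) (f : ℕ → ℝ) (x : ℕ) : ℝ :=
  1 + transProb ω (some x) (some (x - 1)) * f (x - 1)
    + transProb ω (some x) (some (x + 1)) * f (x + 1)

lemma transProb_nonneg (ω : ℕ → Bool) (s t : Option ℕ) : 0 ≤ transProb ω s t := by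
  unfold transProb
  split <;> (try split_ifs) <;> norm_num

lemma liveKernel_eq_zero {x y : ℕ} (h₁ : y ≠ x - 1) (h₂ : y ≠ x + 1) :
    liveKernel ω x y = 0 := by
  simp only [liveKernel, transProb]
  split_ifs <;> simp_all

lemma tsum_liveKernel_mul (x : ℕ) (f : ℕ → ℝ≥0∞) :
    ∑' y, liveKernel ω x y * f y
      = liveKernel ω x (x - 1) * f (x - 1) + liveKernel ω x (x + 1) * f (x + 1) := by
  rw [tsum_eq_sum (s := {x - 1, x + 1}), sum_pair (by omega)]
  intro y hy
  simp only [Finset.mem_insert, Finset.mem_singleton, not_or] at hy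
  rw [liveKernel_eq_zero hy.1 hy.2, zero_mul]

lemma poissonOp_ofReal {f : ℕ → ℝ} (hf : ∀ x, 0 ≤ f x) (x : ℕ) :
    poissonOp ω (fun y => ENNReal.ofReal (f y)) x = ENNReal.ofReal (poissonOpReal ω f x) := by
  have h₁ := mul_nonneg (transProb_nonneg ω (some x) (some (x - 1))) (hf (x - 1))
  have h₂ := mul_nonneg (transProb_nonneg ω (some x) (some (x + 1))) (hf (x + 1))
  rw [poissonOp, tsum_liveKernel_mul, poissonOpReal, liveKernel, liveKernel,
    ← ofReal_mul (transProb_nonneg _ _ _), ← ofReal_mul (transProb_nonneg _ _ _),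
    ← ofReal_one, ← ofReal_add h₁ h₂, ← ofReal_add zero_le_one (add_nonneg h₁ h₂), add_assoc]

lemma poissonOpReal_zero (f : ℕ → ℝ) : poissonOpReal ω f 0 = 1 + 2 / 3 * f 1 := by
  norm_num [poissonOpReal, transProb]

lemma poissonOpReal_succ (f : ℕ → ℝ) (x : ℕ) :
    poissonOpReal ω f (x + 1) = 1 + (if ω (x + 1) then 1 / 3 else 1 / 2) * (f x + f (x + 2)) := by
  cases h : ω (x + 1) <;> simp [poissonOpReal, transProb, h] <;> ring

lemma tsum_occupation_zero_mul (f : ℕ → ℝ≥0∞) : ∑' x, occupation ω 0 x * f x = f 0 := by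
  simp [occupation]

lemma tsum_occupation_succ_mul (n : ℕ) (f : ℕ → ℝ≥0∞) :
    ∑' y, occupation ω (n + 1) y * f y
      = ∑' x, occupation ω n x * ∑' y, liveKernel ω x y * f y := by
  simp only [occupation, ← ENNReal.tsum_mul_right, ← ENNReal.tsum_mul_left, mul_assoc]
  exact ENNReal.tsum_comm

lemma tsum_occupation_mul_poissonOp (n : ℕ) (f : ℕ → ℝ≥0∞) :
    ∑' x, occupation ω n x * poissonOp ω f x
      = ∑' x, occupation ω n x + ∑' y, occupation ω (n + 1) y * f y := by
  simp only [poissonOp, mul_add, mul_one, ENNReal.tsum_add, tsum_occupation_succ_mul]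

lemma sum_range_add_tsum_occupation_mul_le {f : ℕ → ℝ≥0∞} (hf : ∀ x, poissonOp ω f x ≤ f x)
    (n : ℕ) :
    ∑ k ∈ range n, ∑' x, occupation ω k x + ∑' x, occupation ω n x * f x ≤ f 0 := by
  induction n with
  | zero => simp [tsum_occupation_zero_mul]
  | succ n ih =>
    calc _ = ∑ k ∈ range n, ∑' x, occupation ω k x
            + ∑' x, occupation ω n x * poissonOp ω f x := by
          rw [sum_range_succ, tsum_occupation_mul_poissonOp, add_assoc]
      _ ≤ ∑ k ∈ range n, ∑' x, occupation ω k x + ∑' x, occupation ω n x * f x := by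
          gcongr with x
          exact hf x
      _ ≤ f 0 := ih

lemma le_sum_range_add_tsum_occupation_mul {f : ℕ → ℝ≥0∞} (hf : ∀ x, f x ≤ poissonOp ω f x)
    (n : ℕ) :
    f 0 ≤ ∑ k ∈ range n, ∑' x, occupation ω k x + ∑' x, occupation ω n x * f x := by
  induction n with
  | zero => simp [tsum_occupation_zero_mul]
  | succ n ih =>
    calc f 0 ≤ ∑ k ∈ range n, ∑' x, occupation ω k x + ∑' x, occupation ω n x * f x := ih
      _ ≤ ∑ k ∈ range n, ∑' x, occupation ω k x
            + ∑' x, occupation ω n x * poissonOp ω f x := by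
          gcongr with x
          exact hf x
      _ = _ := by rw [sum_range_succ, tsum_occupation_mul_poissonOp, add_assoc]

theorem meanSurvival_le_of_poissonOp_le {f : ℕ → ℝ≥0∞} (hf : ∀ x, poissonOp ω f x ≤ f x) :
    meanSurvival ω ≤ f 0 := by
  rw [meanSurvival, ENNReal.tsum_eq_iSup_nat]
  exact iSup_le fun n => le_self_add.trans (sum_range_add_tsum_occupation_mul_le hf n)

theorem le_meanSurvival_of_le_poissonOp {f : ℕ → ℝ≥0∞} {C : ℝ≥0∞} (hC : C ≠ ⊤)
    (hfC : ∀ x, f x ≤ C) (hf : ∀ x, f x ≤ poissonOp ω f x) : f 0 ≤ meanSurvival ω := by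
  by_cases htop : meanSurvival ω = ⊤
  · exact htop ▸ le_top
  -- the bounded subsolution loses at most `C` times the surviving mass, which tends to zero
  have hmass : Tendsto (fun n => (∑' x, occupation ω n x) * C) atTop (𝓝 0) := by
    simpa using ENNReal.Tendsto.mul_const (ENNReal.tendsto_atTop_zero_of_tsum_ne_top htop)
      (Or.inr hC)
  refine ENNReal.le_of_forall_pos_le_add fun ε hε _ => ?_
  obtain ⟨n, hn⟩ := (hmass.eventually_lt_const (ENNReal.coe_pos.mpr hε)).exists
  calc f 0 ≤ ∑ k ∈ range n, ∑' x, occupation ω k x + ∑' x, occupation ω n x * f x :=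
        le_sum_range_add_tsum_occupation_mul hf n
    _ ≤ ∑ k ∈ range n, ∑' x, occupation ω k x + (∑' x, occupation ω n x) * C := by
        rw [← ENNReal.tsum_mul_right]
        gcongr with x
        exact hfC x
    _ ≤ meanSurvival ω + ε := add_le_add (ENNReal.sum_le_tsum _) hn.le

theorem meanSurvival_le_ofReal {f : ℕ → ℝ} (hf₀ : ∀ x, 0 ≤ f x)
    (hf : ∀ x, poissonOpReal ω f x ≤ f x) : meanSurvival ω ≤ ENNReal.ofReal (f 0) :=
  meanSurvival_le_of_poissonOp_le fun x => by
    rw [poissonOp_ofReal hf₀]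
    exact ENNReal.ofReal_le_ofReal (hf x)

theorem ofReal_le_meanSurvival {f : ℕ → ℝ} {C : ℝ} (hf₀ : ∀ x, 0 ≤ f x) (hfC : ∀ x, f x ≤ C)
    (hf : ∀ x, f x ≤ poissonOpReal ω f x) : ENNReal.ofReal (f 0) ≤ meanSurvival ω :=
  le_meanSurvival_of_le_poissonOp ENNReal.ofReal_ne_top
    (fun x => ENNReal.ofReal_le_ofReal (hfC x)) fun x => by
      rw [poissonOp_ofReal hf₀]
      exact ENNReal.ofReal_le_ofReal (hf x)

lemma _root_.ENat.toENNReal_eq_tsum (t : ℕ∞) :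
    (t : ℝ≥0∞) = ∑' n : ℕ, if (n : ℕ∞) < t then 1 else 0 := by
  induction t using ENat.recTopCoe with
  | top => simp
  | coe m =>
    rw [tsum_eq_sum (s := range m) fun n hn => by simpa using hn,
      sum_ite_of_true fun n hn => by simpa using hn]
    simp

section Walk

open Function

variable {Ω : Type*} {S : ℕ → Ω → Option ℕ}

def pathCylinder (S : ℕ → Ω → Option ℕ) (n : ℕ) (q : ℕ → Option ℕ) : Set Ω :=
  {a | ∀ i ≤ n, S i a = q i}

def aliveAt (S : ℕ → Ω → Option ℕ) (n x : ℕ) : Set Ω :=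
  {a | (∀ j < n, S j a ≠ none) ∧ S n a = some x}

def snocPath {n : ℕ} (p : Fin n → ℕ) (x i : ℕ) : Option ℕ :=
  some (if h : i < n then p ⟨i, h⟩ else x)

lemma aliveAt_eq_iUnion_pathCylinder (n x : ℕ) :
    aliveAt S n x = ⋃ p : Fin n → ℕ, pathCylinder S n (snocPath p x) := by
  ext a
  simp only [aliveAt, pathCylinder, snocPath, Set.mem_iUnion, Set.mem_ofPred_eq]
  constructor
  · rintro ⟨halive, hx⟩
    refine ⟨fun j => (S j a).getD 0, fun i hi => ?_⟩
    rcases hi.lt_or_eq with hi | rfl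
    · obtain ⟨z, hz⟩ := Option.ne_none_iff_exists'.mp (halive i hi)
      simp [hi, hz]
    · simp [hx]
  · rintro ⟨p, hp⟩
    exact ⟨fun j hj => by simp [hp j hj.le], by simpa using hp n le_rfl⟩

lemma pairwise_disjoint_pathCylinder (n x : ℕ) :
    Pairwise (Disjoint on fun p : Fin n → ℕ => pathCylinder S n (snocPath p x)) := by
  refine fun p p' hne => Set.disjoint_left.mpr fun a hp hp' => hne (funext fun i => ?_)
  have := (hp i i.isLt.le).symm.trans (hp' i i.isLt.le)
  simpa [snocPath] using this

lemma aliveAt_succ (n y : ℕ) :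
    aliveAt S (n + 1) y = ⋃ x, aliveAt S n x ∩ {a | S (n + 1) a = some y} := by
  ext a
  simp only [aliveAt, Set.mem_iUnion, Set.mem_inter_iff, Set.mem_ofPred_eq]
  constructor
  · rintro ⟨halive, hy⟩
    obtain ⟨x, hx⟩ := Option.ne_none_iff_exists'.mp (halive n n.lt_succ_self)
    exact ⟨x, ⟨fun j hj => halive j (hj.trans n.lt_succ_self), hx⟩, hy⟩
  · rintro ⟨x, ⟨halive, hx⟩, hy⟩
    refine ⟨fun j hj => ?_, hy⟩
    rcases (Nat.lt_succ_iff.mp hj).lt_or_eq with hj | rfl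
    · exact halive j hj
    · simp [hx]

lemma pairwise_disjoint_aliveAt (n : ℕ) : Pairwise (Disjoint on aliveAt S n) :=
  fun _ _ hne => Set.disjoint_left.mpr fun _ hx hx' =>
    hne (Option.some_injective _ (hx.2.symm.trans hx'.2))

lemma survivalTime_le {a : Ω} {k : ℕ} (hk : S k a = none) : survivalTime S a ≤ k :=
  sInf_le ⟨k, rfl, hk⟩

lemma lt_survivalTime_iff (n : ℕ) (a : Ω) :
    (n : ℕ∞) < survivalTime S a ↔ a ∈ ⋃ x, aliveAt S n x := by
  simp only [Set.mem_iUnion, aliveAt, Set.mem_ofPred_eq]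
  constructor
  · intro hlt
    have halive : ∀ j ≤ n, S j a ≠ none := fun j hj hnone =>
      ((survivalTime_le hnone).trans (Nat.cast_le.mpr hj)).not_gt hlt
    obtain ⟨x, hx⟩ := Option.ne_none_iff_exists'.mp (halive n le_rfl)
    exact ⟨x, fun j hj => halive j hj.le, hx⟩
  · rintro ⟨x, halive, hx⟩
    refine (Nat.cast_lt.mpr n.lt_succ_self).trans_le (le_sInf ?_)
    rintro _ ⟨k, rfl, hk⟩
    refine Nat.cast_le.mpr (Nat.succ_le_of_lt (lt_of_not_ge fun hkn => ?_))
    rcases hkn.lt_or_eq with hkn | rfl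
    · exact halive k hkn hk
    · simp [hx] at hk

variable [MeasurableSpace Ω] {P : Measure Ω}

lemma measurableSet_pathCylinder (hS : ∀ n y, MeasurableSet {a | S n a = y}) (n : ℕ)
    (q : ℕ → Option ℕ) : MeasurableSet (pathCylinder S n q) := by
  simp only [pathCylinder, Set.ofPred_forall]
  exact MeasurableSet.iInter fun i => MeasurableSet.iInter fun _ => hS i (q i)

lemma measurableSet_aliveAt (hS : ∀ n y, MeasurableSet {a | S n a = y}) (n x : ℕ) :
    MeasurableSet (aliveAt S n x) := by
  simp only [aliveAt, Set.ofPred_and, Set.ofPred_forall]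
  exact (MeasurableSet.iInter fun j => MeasurableSet.iInter fun _ => (hS j none).compl).inter
    (hS n (some x))

lemma _root_.IsTrappedRW.measure_aliveAt_inter (h : IsTrappedRW ω P S) (n x y : ℕ) :
    P (aliveAt S n x ∩ {a | S (n + 1) a = some y}) = liveKernel ω x y * P (aliveAt S n x) := by
  obtain ⟨-, hS, -, hMarkov⟩ := h
  have hdisj := pairwise_disjoint_pathCylinder (S := S) n x
  have hdisj' : Pairwise (Disjoint on fun p : Fin n → ℕ =>
      pathCylinder S n (snocPath p x) ∩ {a | S (n + 1) a = some y}) :=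
    fun _ _ hne => (hdisj hne).mono Set.inter_subset_left Set.inter_subset_left
  rw [aliveAt_eq_iUnion_pathCylinder, Set.iUnion_inter,
    measure_iUnion hdisj' fun p => (measurableSet_pathCylinder hS n _).inter (hS _ _),
    measure_iUnion hdisj fun p => measurableSet_pathCylinder hS n _, ← ENNReal.tsum_mul_left]
  refine tsum_congr fun p => ?_
  rw [pathCylinder, ← Set.ofPred_and, hMarkov]
  simp [snocPath, liveKernel]

lemma _root_.IsTrappedRW.measure_aliveAt (h : IsTrappedRW ω P S) (n x : ℕ) :
    P (aliveAt S n x) = occupation ω n x := by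
  induction n generalizing x with
  | zero =>
    obtain ⟨hP, hS, h0, -⟩ := h
    have hS0 : aliveAt S 0 x = {a | S 0 a = some x} := by simp [aliveAt]
    rcases eq_or_ne x 0 with rfl | hx
    · simpa [hS0, occupation] using h0
    · have hnull : P {a | S 0 a = some 0}ᶜ = 0 := (prob_compl_eq_zero_iff (hS 0 _)).mpr h0
      have hsub : {a | S 0 a = some x} ⊆ {a | S 0 a = some 0}ᶜ := fun a ha h0 =>
        hx (Option.some_injective _ (ha.symm.trans h0))
      rw [hS0, measure_mono_null hsub hnull]
      simp [occupation, hx]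
  | succ n ih =>
    have hdisj : Pairwise (Disjoint on fun z => aliveAt S n z ∩ {a | S (n + 1) a = some x}) :=
      fun _ _ hne => (pairwise_disjoint_aliveAt n hne).mono Set.inter_subset_left
        Set.inter_subset_left
    rw [aliveAt_succ, measure_iUnion hdisj
      fun z => (measurableSet_aliveAt h.2.1 n z).inter (h.2.1 _ _), occupation]
    refine tsum_congr fun z => ?_
    rw [h.measure_aliveAt_inter, ih, mul_comm]

theorem _root_.IsTrappedRW.expSurvival_eq_meanSurvival (h : IsTrappedRW ω P S) :
    expSurvival P S = meanSurvival ω := by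
  have hS := h.2.1
  have hset (n : ℕ) : {a | (n : ℕ∞) < survivalTime S a} = ⋃ x, aliveAt S n x :=
    Set.ext fun a => lt_survivalTime_iff n a
  have hmeas (n : ℕ) : MeasurableSet {a | (n : ℕ∞) < survivalTime S a} :=
    hset n ▸ MeasurableSet.iUnion fun x => measurableSet_aliveAt hS n x
  calc expSurvival P S
      = ∫⁻ a, ∑' n : ℕ, {a | (n : ℕ∞) < survivalTime S a}.indicator 1 a ∂P := by
        refine lintegral_congr fun a => ?_
        rw [ENat.toENNReal_eq_tsum]
        simp [Set.indicator_apply]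
    _ = ∑' n : ℕ, P {a | (n : ℕ∞) < survivalTime S a} := by
        rw [lintegral_tsum fun n => (measurable_one.indicator (hmeas n)).aemeasurable]
        simp only [lintegral_indicator_one (hmeas _)]
    _ = meanSurvival ω := by
        refine tsum_congr fun n => ?_
        rw [hset, measure_iUnion (pairwise_disjoint_aliveAt n) (measurableSet_aliveAt hS n)]
        exact tsum_congr (h.measure_aliveAt n)

end Walk

lemma trapLoc_zero (h : ω 0 = true) : trapLoc ω 0 = 0 := by
  rw [trapLoc, Nat.nth_zero]
  exact Nat.sInf_eq_zero.mpr (Or.inl h)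

lemma isTrapConfig_of_forall_ge (h₀ : ω 0 = true) (N : ℕ)
    (hN : ∀ x, N ≤ x → ω x = true) : IsTrapConfig ω :=
  ⟨h₀, (Set.Ici_infinite N).mono hN⟩

def exampleConfig (x : ℕ) : Bool := decide (x ≤ 1 ∨ 27 ≤ x)

def exampleConfigLengthened (x : ℕ) : Bool := decide (x = 0 ∨ x = 2 ∨ 28 ≤ x)

/-- A bounded subsolution for `exampleConfig`: quadratic with second difference `-2` on the
trap-free stretch, and the fixed point `3` of `u = 1 + 2u/3` on the trap tail. -/
def lowerProfile (x : ℕ) : ℝ :=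
  if x = 0 then 151 / 10 else if x ≤ 27 then 3 + (27 - x) * (x - 3 / 10) else 3

/-- A supersolution for `exampleConfigLengthened`; the ratio `1/2` of its tail satisfies
`r + 1/r ≤ 3`. -/
def upperProfile (x : ℕ) : ℝ :=
  if x = 0 then 15 else if x = 1 then 21 else if x ≤ 28 then 25 + (28 - x) * (x - 2)
  else 3 + 22 * (1 / 2) ^ (x - 28)

lemma lowerProfile_of_le {x : ℕ} (h₁ : 1 ≤ x) (h₂ : x ≤ 27) :
    lowerProfile x = 3 + (27 - x) * (x - 3 / 10) := by
  rw [lowerProfile, if_neg (by omega), if_pos h₂]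

lemma lowerProfile_of_ge {x : ℕ} (h : 27 ≤ x) : lowerProfile x = 3 := by
  rcases h.lt_or_eq with h | rfl
  · rw [lowerProfile, if_neg (by omega), if_neg (by omega)]
  · norm_num [lowerProfile]

lemma upperProfile_of_le {x : ℕ} (h₁ : 2 ≤ x) (h₂ : x ≤ 28) :
    upperProfile x = 25 + (28 - x) * (x - 2) := by
  rw [upperProfile, if_neg (by omega), if_neg (by omega), if_pos h₂]

lemma upperProfile_add (m : ℕ) : upperProfile (28 + m) = 3 + 22 * (1 / 2) ^ m := by
  rcases m.eq_zero_or_pos with rfl | hm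
  · norm_num [upperProfile]
  · rw [upperProfile, if_neg (by omega), if_neg (by omega), if_neg (by omega),
      Nat.add_sub_cancel_left]

lemma lowerProfile_nonneg (x : ℕ) : 0 ≤ lowerProfile x := by
  rcases Nat.lt_or_ge 27 x with h | h
  · rw [lowerProfile_of_ge h.le]; norm_num
  rcases x.eq_zero_or_pos with rfl | h₀
  · norm_num [lowerProfile]
  rw [lowerProfile_of_le h₀ h]
  have : (1 : ℝ) ≤ x := by exact_mod_cast h₀
  have : (x : ℝ) ≤ 27 := by exact_mod_cast h
  nlinarith

lemma lowerProfile_le (x : ℕ) : lowerProfile x ≤ 200 := by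
  rcases Nat.lt_or_ge 27 x with h | h
  · rw [lowerProfile_of_ge h.le]; norm_num
  rcases x.eq_zero_or_pos with rfl | h₀
  · norm_num [lowerProfile]
  rw [lowerProfile_of_le h₀ h]
  nlinarith [sq_nonneg ((x : ℝ) - 137 / 10)]

lemma upperProfile_nonneg (x : ℕ) : 0 ≤ upperProfile x := by
  rcases Nat.lt_or_ge x 28 with h | h
  · rcases Nat.lt_or_ge x 2 with h' | h'
    · interval_cases x <;> norm_num [upperProfile]
    rw [upperProfile_of_le h' h.le]
    have : (2 : ℝ) ≤ x := by exact_mod_cast h'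
    have : (x : ℝ) ≤ 28 := by exact_mod_cast h.le
    nlinarith
  · obtain ⟨m, rfl⟩ := Nat.exists_eq_add_of_le h
    rw [upperProfile_add]
    positivity

lemma lowerProfile_le_poissonOpReal (x : ℕ) :
    lowerProfile x ≤ poissonOpReal exampleConfig lowerProfile x := by
  rcases x with _ | x
  · norm_num [poissonOpReal_zero, lowerProfile]
  rw [poissonOpReal_succ]
  rcases Nat.lt_or_ge x 26 with h | h
  · rcases x with _ | x
    · norm_num [lowerProfile, exampleConfig]
    have hfree : exampleConfig (x + 2) = false := by simp [exampleConfig]; omega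
    rw [hfree, lowerProfile_of_le (by omega) (by omega), lowerProfile_of_le (by omega) (by omega),
      lowerProfile_of_le (by omega) (by omega)]
    push_cast
    linarith
  · have htrap : exampleConfig (x + 1) = true := by simp [exampleConfig]; omega
    rw [htrap, if_pos rfl, lowerProfile_of_ge (x := x + 1) (by omega),
      lowerProfile_of_ge (x := x + 2) (by omega)]
    rcases h.lt_or_eq with h | rfl
    · rw [lowerProfile_of_ge h]; norm_num
    · norm_num [lowerProfile]

lemma poissonOpReal_upperProfile_le (x : ℕ) :
    poissonOpReal exampleConfigLengthened upperProfile x ≤ upperProfile x := by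
  rcases Nat.lt_or_ge x 28 with h | h
  · rcases Nat.lt_or_ge x 3 with h' | h'
    · interval_cases x <;> norm_num [poissonOpReal_zero, poissonOpReal_succ, upperProfile,
        exampleConfigLengthened]
    obtain ⟨x, rfl⟩ : ∃ y, x = y + 1 := ⟨x - 1, by omega⟩
    have hfree : exampleConfigLengthened (x + 1) = false := by
      simp [exampleConfigLengthened]; omega
    rw [poissonOpReal_succ, hfree, upperProfile_of_le (by omega) (by omega),
      upperProfile_of_le (by omega) (by omega), upperProfile_of_le (by omega) (by omega)]
    push_cast
    linarith
  · obtain ⟨m, rfl⟩ := Nat.exists_eq_add_of_le h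
    rcases m with _ | m
    · norm_num [poissonOpReal_succ, upperProfile, exampleConfigLengthened]
    have htrap : exampleConfigLengthened (28 + m + 1) = true := by
      simp [exampleConfigLengthened]
      omega
    rw [show 28 + (m + 1) = 28 + m + 1 by ring, poissonOpReal_succ, htrap, if_pos rfl,
      show 28 + m + 1 = 28 + (m + 1) by ring, show 28 + m + 2 = 28 + (m + 2) by ring]
    simp only [upperProfile_add]
    have : (0 : ℝ) ≤ (1 / 2) ^ m := by positivity
    rw [pow_succ, pow_succ]
    linarith

theorem meanSurvival_exampleConfigLengthened_lt :
    meanSurvival exampleConfigLengthened < meanSurvival exampleConfig :=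
  calc meanSurvival exampleConfigLengthened ≤ ENNReal.ofReal (upperProfile 0) :=
        meanSurvival_le_ofReal upperProfile_nonneg poissonOpReal_upperProfile_le
    _ < ENNReal.ofReal (lowerProfile 0) := by
        rw [ENNReal.ofReal_lt_ofReal_iff (by norm_num [lowerProfile])]
        norm_num [lowerProfile, upperProfile]
    _ ≤ meanSurvival exampleConfig :=
        ofReal_le_meanSurvival lowerProfile_nonneg lowerProfile_le lowerProfile_le_poissonOpReal

lemma isTrapConfig_exampleConfig : IsTrapConfig exampleConfig :=
  isTrapConfig_of_forall_ge rfl 27 fun x hx => by simp [exampleConfig, hx]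

lemma isTrapConfig_exampleConfigLengthened : IsTrapConfig exampleConfigLengthened :=
  isTrapConfig_of_forall_ge rfl 28 fun x hx => by simp [exampleConfigLengthened, hx]

lemma isLengthened_exampleConfig : IsLengthened exampleConfig exampleConfigLengthened 1 := by
  rw [IsLengthened, Nat.sub_self, trapLoc_zero rfl]
  refine ⟨fun x hx => ?_, rfl, fun x hx => ?_⟩
  · obtain rfl : x = 0 := Nat.le_zero.mp hx
    rfl
  · simp only [exampleConfig, exampleConfigLengthened, decide_eq_decide]
    omega

end TrappedRW

end

/-- non-monotonicity — lengthening a single interval by one site can strictly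
decrease the expected survival time. -/
theorem expSurvival_not_monotone :
    ∃ (ω₁ ω₂ : ℕ → Bool) (k : ℕ), IsTrapConfig ω₁ ∧ IsTrapConfig ω₂ ∧ 1 ≤ k ∧
      IsLengthened ω₁ ω₂ k ∧
      ∀ (Ω₁ : Type) (_ : MeasurableSpace Ω₁) (P₁ : MeasureTheory.Measure Ω₁)
        (S₁ : ℕ → Ω₁ → Option ℕ), IsTrappedRW ω₁ P₁ S₁ →
      ∀ (Ω₂ : Type) (_ : MeasurableSpace Ω₂) (P₂ : MeasureTheory.Measure Ω₂)
        (S₂ : ℕ → Ω₂ → Option ℕ), IsTrappedRW ω₂ P₂ S₂ →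
        expSurvival P₂ S₂ < expSurvival P₁ S₁ := by
  refine ⟨TrappedRW.exampleConfig, TrappedRW.exampleConfigLengthened, 1,
    TrappedRW.isTrapConfig_exampleConfig, TrappedRW.isTrapConfig_exampleConfigLengthened, le_rfl,
    TrappedRW.isLengthened_exampleConfig, ?_⟩
  intro Ω₁ _ P₁ S₁ h₁ Ω₂ _ P₂ S₂ h₂
  rw [h₁.expSurvival_eq_meanSurvival, h₂.expSurvival_eq_meanSurvival]
  exact TrappedRW.meanSurvival_exampleConfigLengthened_lt
end

section
/- Let m be a positive integer and let c be a positive real number such that (c·m)^{2^n − 1}·m is a positive integer for every n ≥ 1. Then c·m is a positive integer; equivalently, c = γ/m for some positive integer γ. -/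
/-!
Write `N₁ = c m²` for the first integer of the sequence. Multiplying `(c m)^k m = N` by `m^k`
gives `N₁^k m = m^k N`, so `m^k ∣ N₁^k m` for arbitrarily large `k`. Comparing `p`-adic
valuations, `k v_p(m) ≤ k v_p(N₁) + v_p(m)` for all large `k` forces `v_p(m) ≤ v_p(N₁)`,
hence `m ∣ N₁` and `c m = N₁ / m` is an integer.
-/

lemma Nat.le_of_forall_mul_le_mul_add {x y : ℕ} (h : ∀ n, ∃ k ≥ n, k * x ≤ k * y + x) :
    x ≤ y := by
  obtain ⟨k, hk, hkxy⟩ := h (x + 1)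
  by_contra! hyx
  have hky : k * (y + 1) ≤ k * x := Nat.mul_le_mul_left k hyx
  nlinarith

lemma Nat.dvd_of_forall_pow_dvd_pow_mul {m a : ℕ} (hm : m ≠ 0)
    (h : ∀ n, ∃ k ≥ n, m ^ k ∣ a ^ k * m) : m ∣ a := by
  rcases eq_or_ne a 0 with rfl | ha
  · exact dvd_zero m
  rw [← Nat.factorization_le_iff_dvd hm ha]
  intro p
  refine Nat.le_of_forall_mul_le_mul_add fun n => ?_
  obtain ⟨k, hk, hdvd⟩ := h n
  refine ⟨k, hk, ?_⟩
  rw [← Nat.factorization_le_iff_dvd (pow_ne_zero k hm) (by positivity)] at hdvd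
  simpa [Nat.factorization_mul (pow_ne_zero k ha) hm] using hdvd p

theorem c_mul_eq_nat_of_forall_pow_int_general (m : ℕ) (c : ℝ)
    (h : ∀ n : ℕ, 1 ≤ n → ∃ N : ℕ, 0 < N ∧ (N : ℝ) = (c * m) ^ (2 ^ n - 1) * m) :
    ∃ γ : ℕ, 0 < γ ∧ c * m = γ ∧ c = γ / m := by
  obtain ⟨N₁, hN₁pos, hN₁⟩ := h 1 le_rfl
  replace hN₁ : (N₁ : ℝ) = c * m * m := by simpa using hN₁
  have hm : m ≠ 0 := by
    rintro rfl
    simp_all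
  have hmR : (m : ℝ) ≠ 0 := Nat.cast_ne_zero.mpr hm
  have hdvd : m ∣ N₁ := by
    refine Nat.dvd_of_forall_pow_dvd_pow_mul hm fun n => ⟨2 ^ (n + 1) - 1, ?_, ?_⟩
    · have := Nat.lt_two_pow_self (n := n + 1)
      omega
    · obtain ⟨N, -, hN⟩ := h (n + 1) (Nat.le_add_left 1 n)
      refine ⟨N, ?_⟩
      have hpow : (N₁ : ℝ) ^ (2 ^ (n + 1) - 1) * m = m ^ (2 ^ (n + 1) - 1) * N := by
        rw [hN₁, hN]
        ring
      exact_mod_cast hpow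
  obtain ⟨γ, rfl⟩ := hdvd
  have hγ : c * m = γ := by
    apply mul_left_cancel₀ hmR
    push_cast at hN₁
    linarith
  exact ⟨γ, Nat.pos_of_mul_pos_left hN₁pos, hγ, by rw [eq_div_iff hmR, hγ]⟩

/-- if `(c m)^(2^n - 1) m` is a positive integer for every `n ≥ 1`, then
`c m` is a positive integer, i.e. `c = γ / m` for a positive integer `γ`. -/
theorem c_mul_eq_nat_of_forall_pow_int (m : ℕ) (hm : 0 < m) (c : ℝ) (hc : 0 < c)
    (h : ∀ n : ℕ, 1 ≤ n → ∃ N : ℕ, 0 < N ∧ (N : ℝ) = (c * m) ^ (2 ^ n - 1) * m) :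
    ∃ γ : ℕ, 0 < γ ∧ c * m = γ ∧ c = γ / m :=
  c_mul_eq_nat_of_forall_pow_int_general m c h
end
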